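/- Let d,K ∈ ℕ, L ∈ ℝ, let 𝒪 ∈ ℬ(ℝ^d)\{∅} be a nonempty Borel set, let f : 𝒪 × ℝ → ℝ be Borel measurable with |f(x,a) − f(x,b)| ≤ L|a − b| for all x ∈ 𝒪, a,b ∈ ℝ, let (S,𝒮) be a measurable space, let φ_k : 𝒪 × S → 𝒪, k ∈ {0,…,K}, be (ℬ(𝒪)⊗𝒮)/ℬ(𝒪)-measurable, let (Ω,ℱ,ℙ) be a probability space, let W_k : Ω → S, k ∈ {0,…,K}, be independent random variables, for each k ∈ {0,…,K} define X^{k,x}_l ∈ 𝒪 by X^{k,x}_k = x and X^{k,x}_l = φ_l(X^{k,x}_{l+1}, W_l) for l < k, let v : 𝒪 → ℝ be Borel measurable, and assume for all x ∈ 𝒪 that Σ_{k=0}^K E[|f(X^{k,x}_0,0)|² + |v(X^{k,x}_0)|²] < ∞. Then there exists a Borel measurable u : 𝒪 → ℝ such that for all x ∈ 𝒪 it holds that Σ_{k=1}^K E[|u(X^{k,x}_1)|² + |f(X^{1,x}_0, v(X^{1,x}_0))|²] < ∞ and u(x) = E[f(X^{1,x}_0, v(X^{1,x}_0))]. -/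

import Mathlib

open MeasureTheory ProbabilityTheory
open scoped ENNReal

/-! Put `F z := f z (v z)` and `u y := 𝔼[F (φ 0 y (W 0))]`; measurability of `u` is Fubini, and
`u x = 𝔼[F (X 1 0 x)]` because `X 1 0 x = φ 0 x (W 0)`. The variable `X k 1 x` is a function of
`W 1, …, W (k - 1)` only, hence independent of `W 0`. Jensen in the inner expectation and then
freezing the independent argument give
`𝔼[u (X k 1 x)²] ≤ 𝔼[F (φ 0 (X k 1 x) (W 0))²] = 𝔼[F (X k 0 x)²]`,
and the Lipschitz bound `F² ≤ 2 (1 + L²) (f (·) 0² + v²)` makes the latter finite. -/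

lemma ofReal_sq_eq_enorm_sq (a : ℝ) : ENNReal.ofReal (a ^ 2) = ‖a‖ₑ ^ 2 := by
  rw [← enorm_pow, Real.enorm_of_nonneg (sq_nonneg a)]

lemma sq_le_two_mul_add_of_abs_sub_le {p q a L : ℝ} (h : |p - q| ≤ L * |a|) :
    p ^ 2 ≤ 2 * (1 + L ^ 2) * (q ^ 2 + a ^ 2) := by
  have hp : |p| ≤ |q| + |L| * |a| := by
    nlinarith [abs_sub_abs_le_abs_sub p q, le_abs_self L, abs_nonneg a]
  nlinarith [sq_abs p, sq_abs q, sq_abs a, sq_abs L, abs_nonneg p, sq_nonneg (|q| - |L| * |a|),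
    abs_nonneg q, mul_nonneg (abs_nonneg L) (abs_nonneg a)]

lemma measurable_of_backward_recursion {α β γ : Type*} {m : MeasurableSpace α}
    [MeasurableSpace β] [MeasurableSpace γ] {φ : ℕ → β → γ → β} {W : ℕ → α → γ}
    {Y : ℕ → α → β} {k : ℕ} (hYk : Measurable[m] (Y k))
    (hY : ∀ l < k, Y l = fun ω => φ l (Y (l + 1) ω) (W l ω))
    (hφ : ∀ l < k, Measurable fun q : β × γ => φ l q.1 q.2) {l : ℕ} (hlk : l ≤ k)
    (hW : ∀ i, l ≤ i → i < k → Measurable[m] (W i)) : Measurable[m] (Y l) := by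
  induction hlk using Nat.decreasingInduction with
  | self => exact hYk
  | of_succ l hl ih =>
    rw [hY l hl]
    exact (hφ l hl).comp ((ih fun i hi hik => hW i (by omega) hik).prodMk (hW l le_rfl hl))

lemma measurable_biSup_comap {α γ ι : Type*} [MeasurableSpace γ] {W : ι → α → γ} {s : Set ι}
    {i : ι} (hi : i ∈ s) : Measurable[⨆ j ∈ s, MeasurableSpace.comap (W j) ‹_›] (W i) :=
  .of_comap_le (le_biSup (fun j => MeasurableSpace.comap (W j) ‹_›) hi)

section

variable {Ω : Type*} [MeasurableSpace Ω] {μ : Measure Ω}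

lemma enorm_integral_sq_le_lintegral [IsProbabilityMeasure μ] {E : Type*} [NormedAddCommGroup E]
    [NormedSpace ℝ E] {h : Ω → E} (hh : AEStronglyMeasurable h μ) :
    ‖∫ ω, h ω ∂μ‖ₑ ^ 2 ≤ ∫⁻ ω, ‖h ω‖ₑ ^ 2 ∂μ := by
  have h_le : ‖∫ ω, h ω ∂μ‖ₑ ≤ eLpNorm h 2 μ :=
    calc ‖∫ ω, h ω ∂μ‖ₑ ≤ ∫⁻ ω, ‖h ω‖ₑ ∂μ := enorm_integral_le_lintegral_enorm h
      _ = eLpNorm h 1 μ := eLpNorm_one_eq_lintegral_enorm.symm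
      _ ≤ eLpNorm h 2 μ := eLpNorm_le_eLpNorm_of_exponent_le one_le_two hh
  calc ‖∫ ω, h ω ∂μ‖ₑ ^ 2 ≤ eLpNorm h 2 μ ^ 2 := by gcongr
    _ = ∫⁻ ω, ‖h ω‖ₑ ^ 2 ∂μ := by
      simpa using eLpNorm_nnreal_pow_eq_lintegral (μ := μ) (f := h) (p := 2) two_ne_zero

lemma lintegral_ofReal_sq_lt_top_of_abs_sub_le {p q a : Ω → ℝ} {L : ℝ}
    (hqa : ∫⁻ ω, ENNReal.ofReal (q ω ^ 2 + a ω ^ 2) ∂μ < ⊤)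
    (hpq : ∀ ω, |p ω - q ω| ≤ L * |a ω|) : ∫⁻ ω, ENNReal.ofReal (p ω ^ 2) ∂μ < ⊤ :=
  calc ∫⁻ ω, ENNReal.ofReal (p ω ^ 2) ∂μ
      ≤ ∫⁻ ω, ENNReal.ofReal (2 * (1 + L ^ 2)) * ENNReal.ofReal (q ω ^ 2 + a ω ^ 2) ∂μ := by
        refine lintegral_mono fun ω => ?_
        rw [← ENNReal.ofReal_mul (by positivity)]
        exact ENNReal.ofReal_le_ofReal (sq_le_two_mul_add_of_abs_sub_le (hpq ω))
    _ = ENNReal.ofReal (2 * (1 + L ^ 2)) * ∫⁻ ω, ENNReal.ofReal (q ω ^ 2 + a ω ^ 2) ∂μ :=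
        lintegral_const_mul' _ _ ENNReal.ofReal_ne_top
    _ < ⊤ := ENNReal.mul_lt_top ENNReal.ofReal_lt_top hqa

lemma lintegral_ofReal_sq_add_sq_lt_top {p q : Ω → ℝ} (hp : Measurable p)
    (hp2 : ∫⁻ ω, ENNReal.ofReal (p ω ^ 2) ∂μ < ⊤) (hq2 : ∫⁻ ω, ENNReal.ofReal (q ω ^ 2) ∂μ < ⊤) :
    ∫⁻ ω, ENNReal.ofReal (p ω ^ 2 + q ω ^ 2) ∂μ < ⊤ := by
  simp only [fun ω => ENNReal.ofReal_add (sq_nonneg (p ω)) (sq_nonneg (q ω))]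
  rw [lintegral_add_left (hp.pow_const 2).ennreal_ofReal]
  exact ENNReal.add_lt_top.mpr ⟨hp2, hq2⟩

namespace ProbabilityTheory

variable {β γ : Type*} [MeasurableSpace β] [MeasurableSpace γ] {Y : Ω → β} {Z : Ω → γ}

lemma IndepFun.lintegral_lintegral_comp_eq [IsFiniteMeasure μ] (hYZ : IndepFun Y Z μ)
    (hY : Measurable Y) (hZ : Measurable Z) {H : β × γ → ℝ≥0∞} (hH : Measurable H) :
    ∫⁻ ω, ∫⁻ ω', H (Y ω, Z ω') ∂μ ∂μ = ∫⁻ ω, H (Y ω, Z ω) ∂μ := by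
  rw [← lintegral_map hH (hY.prodMk hZ),
    (indepFun_iff_map_prod_eq_prod_map_map hY.aemeasurable hZ.aemeasurable).mp hYZ,
    lintegral_prod _ hH.aemeasurable, lintegral_map hH.lintegral_prod_right' hY]
  exact lintegral_congr fun ω => (lintegral_map (hH.comp measurable_prodMk_left) hZ).symm

lemma IndepFun.lintegral_sq_integral_comp_le [IsProbabilityMeasure μ] (hYZ : IndepFun Y Z μ)
    (hY : Measurable Y) (hZ : Measurable Z) {G : β → γ → ℝ}
    (hG : Measurable (Function.uncurry G)) :
    ∫⁻ ω, ENNReal.ofReal ((∫ ω', G (Y ω) (Z ω') ∂μ) ^ 2) ∂μ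
      ≤ ∫⁻ ω, ENNReal.ofReal (G (Y ω) (Z ω) ^ 2) ∂μ := by
  simp only [ofReal_sq_eq_enorm_sq]
  calc ∫⁻ ω, ‖∫ ω', G (Y ω) (Z ω') ∂μ‖ₑ ^ 2 ∂μ
      ≤ ∫⁻ ω, ∫⁻ ω', ‖G (Y ω) (Z ω')‖ₑ ^ 2 ∂μ ∂μ :=
        lintegral_mono fun ω => enorm_integral_sq_le_lintegral
          (hG.comp (measurable_const.prodMk hZ)).aestronglyMeasurable
    _ = ∫⁻ ω, ‖G (Y ω) (Z ω)‖ₑ ^ 2 ∂μ :=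
        hYZ.lintegral_lintegral_comp_eq hY hZ (hG.enorm.pow_const 2)

lemma iIndepFun.indepFun_of_measurable_iSup_compl {ι : Type*} {W : ι → Ω → γ}
    (hW : iIndepFun W μ) (hWm : ∀ i, Measurable (W i)) (j : ι)
    (hY : Measurable[⨆ i ∈ ({j}ᶜ : Set ι), MeasurableSpace.comap (W i) ‹_›] Y) :
    IndepFun Y (W j) μ := by
  have h_split := indep_iSup_of_disjoint (fun i => (hWm i).comap_le) hW.iIndep
    (disjoint_compl_left (a := ({j} : Set ι)))
  rw [IndepFun_iff_Indep]
  refine indep_of_indep_of_le_right (indep_of_indep_of_le_left h_split hY.comap_le) ?_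
  exact le_biSup (fun i => MeasurableSpace.comap (W i) ‹_›) (Set.mem_singleton j)

end ProbabilityTheory

end

theorem welldefinedness_induction_step_general
    (d K : ℕ) (hK : 0 < K) (L : ℝ)
    (O : Set (Fin d → ℝ))
    (f : O → ℝ → ℝ) (hf : Measurable (fun q : O × ℝ => f q.1 q.2))
    (hfL : ∀ (x : O) (a b : ℝ), |f x a - f x b| ≤ L * |a - b|)
    {S : Type*} [MeasurableSpace S]
    (φ : ℕ → O → S → O) (hφ : ∀ k, k ≤ K → Measurable (fun q : O × S => φ k q.1 q.2))
    {Ω : Type*} [MeasurableSpace Ω] (P : Measure Ω) [IsProbabilityMeasure P]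
    (W : ℕ → Ω → S) (hWmeas : ∀ k, Measurable (W k))
    (hWindep : iIndepFun
      (fun k : Fin (K + 1) => W k) P)
    (X : ℕ → ℕ → O → Ω → O)
    (hXk : ∀ (k : ℕ) (x : O) (ω : Ω), k ≤ K → X k k x ω = x)
    (hXl : ∀ (k l : ℕ) (x : O) (ω : Ω), l < k → k ≤ K →
      X k l x ω = φ l (X k (l + 1) x ω) (W l ω))
    (v : O → ℝ) (hv : Measurable v)
    (hBound : ∀ x : O, ∑ k ∈ Finset.range (K + 1),
      ∫⁻ ω, ENNReal.ofReal ((f (X k 0 x ω) 0) ^ 2 + (v (X k 0 x ω)) ^ 2) ∂P < ⊤) :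
    ∃ u : O → ℝ, Measurable u ∧ ∀ x : O,
      (∑ k ∈ Finset.Icc 1 K,
        ∫⁻ ω, ENNReal.ofReal ((u (X k 1 x ω)) ^ 2
          + (f (X 1 0 x ω) (v (X 1 0 x ω))) ^ 2) ∂P < ⊤) ∧
      u x = ∫ ω, f (X 1 0 x ω) (v (X 1 0 x ω)) ∂P := by
  set F : O → ℝ := fun z => f z (v z)
  have hG : Measurable (Function.uncurry fun y s => F (φ 0 y s)) :=
    (hf.comp (measurable_id.prodMk hv)).comp (hφ 0 K.zero_le)
  set u : O → ℝ := fun y => ∫ ω, F (φ 0 y (W 0 ω)) ∂P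
  have hu : Measurable u :=
    (hG.comp (measurable_fst.prodMk ((hWmeas 0).comp measurable_snd))).stronglyMeasurable
      |>.integral_prod_right'.measurable
  have hF_sq (k : ℕ) (hk : k ≤ K) (x : O) : ∫⁻ ω, ENNReal.ofReal (F (X k 0 x ω) ^ 2) ∂P < ⊤ :=
    lintegral_ofReal_sq_lt_top_of_abs_sub_le
      (ENNReal.sum_lt_top.mp (hBound x) k (Finset.mem_range.mpr (by omega)))
      fun ω => by simpa using hfL (X k 0 x ω) (v (X k 0 x ω)) 0
  have hX1 (k : ℕ) (hk1 : 1 ≤ k) (hkK : k ≤ K) (x : O) :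
      Measurable[⨆ i ∈ ({0}ᶜ : Set (Fin (K + 1))), MeasurableSpace.comap (W i) ‹_›]
        (X k 1 x) :=
    measurable_of_backward_recursion (funext (hXk k x · hkK) ▸ measurable_const)
      (fun l hl => funext fun ω => hXl k l x ω hl hkK) (fun l hl => hφ l (by omega)) hk1
      fun i hi hik => measurable_biSup_comap (i := (⟨i, by omega⟩ : Fin (K + 1)))
        (by simpa [Fin.ext_iff] using Nat.one_le_iff_ne_zero.mp hi)
  refine ⟨u, hu, fun x => ⟨ENNReal.sum_lt_top.mpr fun k hk => ?_, ?_⟩⟩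
  · obtain ⟨hk1, hkK⟩ := Finset.mem_Icc.mp hk
    have hY := (hX1 k hk1 hkK x).mono (iSup₂_le fun i _ => (hWmeas i).comap_le) le_rfl
    refine lintegral_ofReal_sq_add_sq_lt_top (hu.comp hY) ?_ (hF_sq 1 hK x)
    calc ∫⁻ ω, ENNReal.ofReal (u (X k 1 x ω) ^ 2) ∂P
        ≤ ∫⁻ ω, ENNReal.ofReal (F (φ 0 (X k 1 x ω) (W 0 ω)) ^ 2) ∂P :=
          (hWindep.indepFun_of_measurable_iSup_compl (fun i => hWmeas i) 0 (hX1 k hk1 hkK x)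
            ).lintegral_sq_integral_comp_le hY (hWmeas 0) hG
      _ = ∫⁻ ω, ENNReal.ofReal (F (X k 0 x ω) ^ 2) ∂P := by
          simp only [hXl k 0 x _ hk1 hkK]
      _ < ⊤ := hF_sq k hkK x
  · exact integral_congr_ae (.of_forall fun ω => by
      simp only [F, hXl 1 0 x ω Nat.one_pos hK, hXk 1 x ω hK])

theorem welldefinedness_induction_step
    (d K : ℕ) (hd : 0 < d) (hK : 0 < K) (L : ℝ)
    (O : Set (Fin d → ℝ)) (hOmeas : MeasurableSet O) (hOne : O.Nonempty)
    (f : O → ℝ → ℝ) (hf : Measurable (fun q : O × ℝ => f q.1 q.2))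
    (hfL : ∀ (x : O) (a b : ℝ), |f x a - f x b| ≤ L * |a - b|)
    {S : Type*} [MeasurableSpace S]
    (φ : ℕ → O → S → O) (hφ : ∀ k, k ≤ K → Measurable (fun q : O × S => φ k q.1 q.2))
    {Ω : Type*} [MeasurableSpace Ω] (P : Measure Ω) [IsProbabilityMeasure P]
    (W : ℕ → Ω → S) (hWmeas : ∀ k, Measurable (W k))
    (hWindep : iIndepFun
      (fun k : Fin (K + 1) => W k) P)
    (X : ℕ → ℕ → O → Ω → O)
    (hXk : ∀ (k : ℕ) (x : O) (ω : Ω), k ≤ K → X k k x ω = x)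
    (hXl : ∀ (k l : ℕ) (x : O) (ω : Ω), l < k → k ≤ K →
      X k l x ω = φ l (X k (l + 1) x ω) (W l ω))
    (v : O → ℝ) (hv : Measurable v)
    (hBound : ∀ x : O, ∑ k ∈ Finset.range (K + 1),
      ∫⁻ ω, ENNReal.ofReal ((f (X k 0 x ω) 0) ^ 2 + (v (X k 0 x ω)) ^ 2) ∂P < ⊤) :
    ∃ u : O → ℝ, Measurable u ∧ ∀ x : O,
      (∑ k ∈ Finset.Icc 1 K,
        ∫⁻ ω, ENNReal.ofReal ((u (X k 1 x ω)) ^ 2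
          + (f (X 1 0 x ω) (v (X 1 0 x ω))) ^ 2) ∂P < ⊤) ∧
      u x = ∫ ω, f (X 1 0 x ω) (v (X 1 0 x ω)) ∂P :=
  welldefinedness_induction_step_general d K hK L O f hf hfL φ hφ P W hWmeas hWindep X hXk hXl v hv
    hBound
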